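/- Let S be a monoid and let A be a free S-act with basis X (equivalently, A is isomorphic to the disjoint union of copies of the S-act S indexed by X). Then A is cancellable if and only if X is finite. -/
import Mathlib


universe u v w

/-- A right `S`-act structure on a type `A`: a map `A × S → A`, `(a, s) ↦ a · s`,
with `a · 1 = a` and `a · (s*t) = (a · s) · t`. (`S`-acts are additionally required
to be nonempty; this is imposed via `Nonempty` hypotheses.) -/
class RAct (S : Type u) [Monoid S] (A : Type v) : Type (max u v) where
  act : A → S → A
  act_one : ∀ a : A, act a 1 = a
  act_mul : ∀ (a : A) (s t : S), act a (s * t) = act (act a s) t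

/-- Isomorphism of `S`-acts: a bijective action-preserving map. -/
def ActIso (S : Type u) [Monoid S] (A : Type v) (B : Type w) [RAct S A] [RAct S B] : Prop :=
  ∃ e : A ≃ B, ∀ (a : A) (s : S), e (RAct.act a s) = RAct.act (e a) s

/-- The coproduct (disjoint union) of two `S`-acts, with componentwise action. -/
instance sumRAct (S : Type u) [Monoid S] (A : Type v) (B : Type w) [RAct S A] [RAct S B] :
    RAct S (A ⊕ B) where
  act x s := Sum.map (fun a => RAct.act a s) (fun b => RAct.act b s) x
  act_one := by rintro (a | b) <;> simp [RAct.act_one]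
  act_mul := by rintro (a | b) s t <;> simp [RAct.act_mul]

/-- An `S`-act `A` is cancellable if `A ⊔ B ≅ A ⊔ C` implies `B ≅ C`
for all `S`-acts `B`, `C`. -/
def Cancellable (S : Type u) [Monoid S] (A : Type u) [RAct S A] : Prop :=
  ∀ (B C : Type u) [RAct S B] [RAct S C] [Nonempty B] [Nonempty C],
    ActIso S (A ⊕ B) (A ⊕ C) → ActIso S B C

/-- The monoid `S` as a right `S`-act over itself via its multiplication. -/
instance selfRAct (S : Type u) [Monoid S] : RAct S S where
  act a s := a * s
  act_one := mul_one
  act_mul a s t := (mul_assoc a s t).symm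

/-- The coproduct (disjoint union) of a family of `S`-acts, with componentwise action. -/
instance sigmaRAct (S : Type u) [Monoid S] {I : Type w} (A : I → Type v)
    [∀ i, RAct S (A i)] : RAct S (Σ i, A i) where
  act x s := ⟨x.1, RAct.act x.2 s⟩
  act_one x := by cases x; simp [RAct.act_one]
  act_mul x s t := by cases x; simp [RAct.act_mul]

section Aux

variable {S : Type u} [Monoid S]

@[simp] lemma act_inl {A : Type v} {B : Type w} [RAct S A] [RAct S B] (a : A) (s : S) :
    (RAct.act (Sum.inl a : A ⊕ B) s) = Sum.inl (RAct.act a s) := rfl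

@[simp] lemma act_inr {A : Type v} {B : Type w} [RAct S A] [RAct S B] (b : B) (s : S) :
    (RAct.act (Sum.inr b : A ⊕ B) s) = Sum.inr (RAct.act b s) := rfl

@[simp] lemma act_self (a s : S) : @RAct.act S _ S (selfRAct S) a s = a * s := rfl

@[simp] lemma act_sigma {I : Type w} (A : I → Type v) [∀ i, RAct S (A i)]
    (i : I) (a : A i) (s : S) :
    RAct.act (⟨i, a⟩ : Σ i, A i) s = ⟨i, RAct.act a s⟩ := rfl

lemma actIso_refl (A : Type v) [RAct S A] : ActIso S A A :=
  ⟨Equiv.refl A, fun _ _ => rfl⟩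

lemma actIso_symm {A : Type v} {B : Type w} [RAct S A] [RAct S B]
    (h : ActIso S A B) : ActIso S B A := by
  obtain ⟨e, he⟩ := h
  refine ⟨e.symm, fun b s => ?_⟩
  conv_lhs => rw [← e.apply_symm_apply b, ← he]
  rw [e.symm_apply_apply]

lemma actIso_trans {A : Type u} {B : Type v} {C : Type w} [RAct S A] [RAct S B] [RAct S C]
    (h : ActIso S A B) (h' : ActIso S B C) : ActIso S A C := by
  obtain ⟨e, he⟩ := h; obtain ⟨f, hf⟩ := h'
  exact ⟨e.trans f, fun a s => by simp [he, hf]⟩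

lemma actIso_sumCongr {A A' B B' : Type v} [RAct S A] [RAct S A'] [RAct S B] [RAct S B']
    (h : ActIso S A A') (h' : ActIso S B B') : ActIso S (A ⊕ B) (A' ⊕ B') := by
  obtain ⟨e, he⟩ := h; obtain ⟨f, hf⟩ := h'
  refine ⟨Equiv.sumCongr e f, ?_⟩
  rintro (a | b) s <;> simp [he, hf]

lemma actIso_sumAssoc (A B C : Type v) [RAct S A] [RAct S B] [RAct S C] :
    ActIso S ((A ⊕ B) ⊕ C) (A ⊕ (B ⊕ C)) := by
  refine ⟨Equiv.sumAssoc A B C, ?_⟩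
  rintro ((a | b) | c) s <;> rfl

/-- reindexing a constant sigma along an equiv -/
lemma actIso_sigmaReindex {X : Type v} {Y : Type w} (f : X ≃ Y) :
    ActIso S (Σ _ : X, S) (Σ _ : Y, S) := by
  refine ⟨Equiv.sigmaCongr f (fun _ => Equiv.refl S), ?_⟩
  rintro ⟨x, a⟩ s; rfl

lemma actIso_sigmaSum (X : Type v) (Y : Type v) :
    ActIso S (Σ _ : X ⊕ Y, S) ((Σ _ : X, S) ⊕ (Σ _ : Y, S)) := by
  refine ⟨⟨fun p => Sum.elim (fun x => Sum.inl ⟨x, p.2⟩) (fun y => Sum.inr ⟨y, p.2⟩) p.1,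
    fun q => Sum.elim (fun p => ⟨Sum.inl p.1, p.2⟩) (fun p => ⟨Sum.inr p.1, p.2⟩) q, ?_, ?_⟩, ?_⟩
  · rintro ⟨x | y, a⟩ <;> rfl
  · rintro (⟨x, a⟩ | ⟨y, a⟩) <;> rfl
  · rintro ⟨x | y, a⟩ s <;> rfl

lemma actIso_sigmaPUnit : ActIso S (Σ _ : PUnit.{v+1}, S) S := by
  refine ⟨⟨fun p => p.2, fun s => ⟨PUnit.unit, s⟩, ?_, ?_⟩, ?_⟩
  · rintro ⟨⟨⟩, a⟩; rfl
  · intro s; rfl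
  · rintro ⟨⟨⟩, a⟩ s; rfl

lemma cancellable_of_iso {A A' : Type u} [RAct S A] [RAct S A']
    (h : ActIso S A A') (h' : Cancellable S A') : Cancellable S A := by
  intro B C _ _ _ _ hbc
  exact h' B C <| actIso_trans (actIso_sumCongr (actIso_symm h) (actIso_refl B))
    <| actIso_trans hbc (actIso_sumCongr h (actIso_refl C))

lemma cancellable_sum {A A' : Type u} [RAct S A] [RAct S A']
    (h : Cancellable S A) (h' : Cancellable S A') : Cancellable S (A ⊕ A') := by
  intro B C _ _ _ _ hbc
  have h1 : ActIso S (A ⊕ (A' ⊕ B)) (A ⊕ (A' ⊕ C)) :=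
    actIso_trans (actIso_symm (actIso_sumAssoc A A' B))
      (actIso_trans hbc (actIso_sumAssoc A A' C))
  exact h' B C (h (A' ⊕ B) (A' ⊕ C) h1)

lemma cancellable_empty {A : Type u} [RAct S A] [IsEmpty A] : Cancellable S A := by
  intro B C _ _ _ _ hbc
  obtain ⟨e, he⟩ := hbc
  have key : ∀ b : B, ∃ c : C, e (Sum.inr b) = Sum.inr c := by
    intro b
    rcases h : e (Sum.inr b) with a | c
    · exact isEmptyElim a
    · exact ⟨c, rfl⟩
  choose g hg using key
  have key' : ∀ c : C, ∃ b : B, e.symm (Sum.inr c) = Sum.inr b := by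
    intro c
    rcases h : e.symm (Sum.inr c) with a | b
    · exact isEmptyElim a
    · exact ⟨b, rfl⟩
  choose g' hg' using key'
  refine ⟨⟨g, g', ?_, ?_⟩, ?_⟩
  · intro b
    have := hg' (g b)
    rw [← hg b, Equiv.symm_apply_apply] at this
    exact Sum.inr_injective this.symm
  · intro c
    have := hg (g' c)
    rw [← hg' c, Equiv.apply_symm_apply] at this
    exact Sum.inr_injective this.symm
  · intro b s
    have h1 : e (Sum.inr (RAct.act b s)) = Sum.inr (RAct.act (g b) s) := by
      have := he (Sum.inr b) s
      rw [hg b] at this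
      simpa using this
    have := hg (RAct.act b s)
    rw [h1] at this
    exact Sum.inr_injective this.symm

lemma cancellable_self : Cancellable S S := by
  intro B C _ _ _ _ hbc
  obtain ⟨e, he⟩ := hbc
  have hesymm : ∀ (x : S ⊕ C) (s : S), e.symm (RAct.act x s) = RAct.act (e.symm x) s := by
    intro x s
    conv_lhs => rw [← e.apply_symm_apply x, ← he]
    rw [e.symm_apply_apply]
  have he1 : ∀ s : S, e (Sum.inl s) = RAct.act (e (Sum.inl (1:S))) s := by
    intro s
    rw [← he]
    simp
  have he1' : ∀ s : S, e.symm (Sum.inl s) = RAct.act (e.symm (Sum.inl (1:S))) s := by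
    intro s
    rw [← hesymm]
    simp
  rcases h1 : e (Sum.inl (1:S)) with t | c₀
  · -- Case A : e maps the S-summand into the S-summand
    obtain ⟨u, hu⟩ : ∃ u, e.symm (Sum.inl (1:S)) = Sum.inl u := by
      rcases h2 : e.symm (Sum.inl (1:S)) with u | b
      · exact ⟨u, rfl⟩
      · exfalso
        have := he1' t
        rw [h2] at this
        rw [← h1, Equiv.symm_apply_apply] at this
        simp at this
    have hinr : ∀ b : B, ∃ c : C, e (Sum.inr b) = Sum.inr c := by
      intro b
      rcases h : e (Sum.inr b) with s | c
      · exfalso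
        have h2 := he1' s
        rw [hu] at h2
        rw [← h, Equiv.symm_apply_apply] at h2
        simp at h2
      · exact ⟨c, rfl⟩
    have hinr' : ∀ c : C, ∃ b : B, e.symm (Sum.inr c) = Sum.inr b := by
      intro c
      rcases h : e.symm (Sum.inr c) with s | b
      · exfalso
        have h2 := he1 s
        rw [h1] at h2
        rw [← h, Equiv.apply_symm_apply] at h2
        simp at h2
      · exact ⟨b, rfl⟩
    choose g hg using hinr
    choose g' hg' using hinr'
    refine ⟨⟨g, g', ?_, ?_⟩, ?_⟩
    · intro b
      have := hg' (g b)
      rw [← hg b, Equiv.symm_apply_apply] at this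
      exact Sum.inr_injective this.symm
    · intro c
      have := hg (g' c)
      rw [← hg' c, Equiv.apply_symm_apply] at this
      exact Sum.inr_injective this.symm
    · intro b s
      have h1 : e (Sum.inr (RAct.act b s)) = Sum.inr (RAct.act (g b) s) := by
        have := he (Sum.inr b) s
        rw [hg b] at this
        simpa using this
      have := hg (RAct.act b s)
      rw [h1] at this
      exact Sum.inr_injective this.symm
  · -- Case B : e maps the S-summand into C
    obtain ⟨b₀, hb₀⟩ : ∃ b₀, e.symm (Sum.inl (1:S)) = Sum.inr b₀ := by
      rcases h2 : e.symm (Sum.inl (1:S)) with u | b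
      · exfalso
        have := he1 u
        rw [h1] at this
        rw [← h2, Equiv.apply_symm_apply] at this
        simp at this
      · exact ⟨b, rfl⟩
    have heinl : ∀ s : S, e (Sum.inl s) = Sum.inr (RAct.act c₀ s) := by
      intro s; rw [he1 s, h1]; rfl
    have heinl' : ∀ s : S, e.symm (Sum.inl s) = Sum.inr (RAct.act b₀ s) := by
      intro s; rw [he1' s, hb₀]; rfl
    have hec : e (Sum.inr b₀) = Sum.inl 1 := by
      rw [← hb₀, Equiv.apply_symm_apply]
    have hec' : e.symm (Sum.inr c₀) = Sum.inl 1 := by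
      rw [← h1, Equiv.symm_apply_apply]
    set g : B → C := fun b => Sum.elim (fun s => RAct.act c₀ s) id (e (Sum.inr b)) with hgdef
    set g' : C → B := fun c => Sum.elim (fun s => RAct.act b₀ s) id (e.symm (Sum.inr c)) with hg'def
    refine ⟨⟨g, g', ?_, ?_⟩, ?_⟩
    · intro b
      rcases h : e (Sum.inr b) with s | c
      · have hgb : g b = RAct.act c₀ s := by rw [hgdef]; simp [h]
        have hb : Sum.inr b = (Sum.inl s : S ⊕ B) ∨ b = RAct.act b₀ s := by
          right
          have : e.symm (Sum.inl s) = Sum.inr b := by rw [← h, Equiv.symm_apply_apply]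
          rw [heinl' s] at this
          exact (Sum.inr_injective this).symm
        rcases hb with h' | h'
        · exact absurd h' (by simp)
        · have : e.symm (Sum.inr (g b)) = Sum.inl s := by
            rw [hgb]
            have : (Sum.inr (RAct.act c₀ s) : S ⊕ C) = RAct.act (Sum.inr c₀) s := rfl
            rw [this, hesymm, hec']
            simp
          simp only [hg'def, g', this]
          simpa using h'.symm
      · have hgb : g b = c := by rw [hgdef]; simp [h]
        have : e.symm (Sum.inr c) = Sum.inr b := by rw [← h, Equiv.symm_apply_apply]
        simp only [hg'def, g', hgb, this]
        rfl
    · intro c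
      rcases h : e.symm (Sum.inr c) with s | b
      · have hgc : g' c = RAct.act b₀ s := by rw [hg'def]; simp [h]
        have h' : c = RAct.act c₀ s := by
          have : e (Sum.inl s) = Sum.inr c := by rw [← h, Equiv.apply_symm_apply]
          rw [heinl s] at this
          exact (Sum.inr_injective this).symm
        have : e (Sum.inr (g' c)) = Sum.inl s := by
          rw [hgc]
          have : (Sum.inr (RAct.act b₀ s) : S ⊕ B) = RAct.act (Sum.inr b₀) s := rfl
          rw [this, he, hec]
          simp
        simp only [hgdef, g, this]
        simpa using h'.symm
      · have hgc : g' c = b := by rw [hg'def]; simp [h]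
        have : e (Sum.inr b) = Sum.inr c := by rw [← h, Equiv.apply_symm_apply]
        simp only [hgdef, g, hgc, this]
        rfl
    · intro b s
      have key := he (Sum.inr b) s
      rcases h : e (Sum.inr b) with t | c
      · rw [h] at key
        have h2 : e (Sum.inr (RAct.act b s)) = Sum.inl (t * s) := key
        simp only [hgdef, Equiv.coe_fn_mk]
        rw [h2, h]
        simp [RAct.act_mul]
      · rw [h] at key
        have h2 : e (Sum.inr (RAct.act b s)) = Sum.inr (RAct.act c s) := key
        simp only [hgdef, Equiv.coe_fn_mk]
        rw [h2, h]
        simp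

lemma cancellable_free_fin : ∀ (n : ℕ) (X : Type u) (_ : X ≃ Fin n),
    Cancellable S (Σ _ : X, S) := by
  intro n
  induction n with
  | zero =>
    intro X f
    have : IsEmpty X := f.isEmpty
    have : IsEmpty (Σ _ : X, S) := by infer_instance
    exact cancellable_empty
  | succ n ih =>
    intro X f
    have f2 : X ≃ PUnit.{u+1} ⊕ ULift.{u} (Fin n) := by
      refine f.trans <| (finSuccEquiv n).trans <| (Equiv.optionEquivSumPUnit _).trans ?_
      exact (Equiv.sumComm _ _).trans (Equiv.sumCongr (Equiv.refl _) Equiv.ulift.symm)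
    have hiso : ActIso S (Σ _ : X, S) (S ⊕ (Σ _ : ULift.{u} (Fin n), S)) := by
      refine actIso_trans (actIso_sigmaReindex f2) ?_
      refine actIso_trans (actIso_sigmaSum _ _) ?_
      exact actIso_sumCongr actIso_sigmaPUnit (actIso_refl _)
    exact cancellable_of_iso hiso
      (cancellable_sum cancellable_self (ih (ULift.{u} (Fin n)) Equiv.ulift))

lemma not_actIso_self_sum : ¬ ActIso S S (S ⊕ S) := by
  rintro ⟨e, he⟩
  have key : ∀ s : S, e s = RAct.act (e 1) s := by
    intro s
    rw [← he]
    simp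
  rcases h1 : e (1:S) with t | t
  · obtain ⟨s, hs⟩ := e.surjective (Sum.inr (1:S))
    rw [key s, h1] at hs
    simp at hs
  · obtain ⟨s, hs⟩ := e.surjective (Sum.inl (1:S))
    rw [key s, h1] at hs
    simp at hs

end Aux

/-- A free `S`-act with basis `X` (i.e. isomorphic to the disjoint
union of copies of `S` indexed by `X`) is cancellable iff `X` is finite. -/
theorem free_cancellable_iff (S : Type u) [Monoid S] (A : Type u) [RAct S A] [Nonempty A]
    (X : Type u) (hfree : ActIso S A (Σ _ : X, S)) :
    Cancellable S A ↔ Finite X := by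
  constructor
  · intro hcan
    by_contra hfin
    have hinf : Infinite X := not_finite_iff_infinite.mp hfin
    -- X ⊕ PUnit ≃ X
    have hcard : Cardinal.mk (X ⊕ PUnit.{u+1}) = Cardinal.mk X := by
      simp [Cardinal.mk_sum, Cardinal.add_one_eq (Cardinal.aleph0_le_mk X)]
    obtain ⟨f⟩ := Cardinal.eq.mp hcard
    -- A ⊕ S ≅ A
    have h1 : ActIso S (A ⊕ S) A := by
      refine actIso_trans (actIso_sumCongr hfree (actIso_symm actIso_sigmaPUnit)) ?_
      refine actIso_trans (actIso_symm (actIso_sigmaSum X PUnit.{u+1})) ?_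
      exact actIso_trans (actIso_sigmaReindex f) (actIso_symm hfree)
    have h2 : ActIso S (A ⊕ (S ⊕ S)) A := by
      refine actIso_trans (actIso_symm (actIso_sumAssoc A S S)) ?_
      exact actIso_trans (actIso_sumCongr h1 (actIso_refl S)) h1
    have h3 : ActIso S (A ⊕ S) (A ⊕ (S ⊕ S)) := actIso_trans h1 (actIso_symm h2)
    exact not_actIso_self_sum (hcan S (S ⊕ S) h3)
  · intro hfin
    obtain ⟨n, ⟨f⟩⟩ := Finite.exists_equiv_fin X
    exact cancellable_of_iso hfree (cancellable_free_fin n X f)
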